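/- arXiv:2408.00708 — 4 statements merged into one kernel-verified Lean document; each statement's English description precedes it below -/
import Mathlib

section
/- Let X be a real normed linear space and let x ∈ X with x ≠ 0. Then x is ρ₋-smooth if and only if the set x^{⊥₋} = {y ∈ X : ρ'₋(x,y) = 0} is a linear subspace of X of codimension one (i.e., a maximal proper linear subspace of X). -/
/-!
Along each line `t ↦ x + t • y` the norm is convex, so the difference quotients defining
`ρ'₋(x, y)` are monotone and converge. Reparametrising the line shows that `ρ'₋(x, ·)` is positively
homogeneous and satisfies `ρ'₋(x, αx + y) = α‖x‖² + ρ'₋(x, y)`. Hence, if `ρ'₋(x, ·)` is additive it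
is a linear functional, nonzero because `ρ'₋(x, x) = ‖x‖²`, and its kernel `x^{⊥₋}` is a hyperplane.
Conversely, if `x^{⊥₋}` is a hyperplane it is complementary to `ℝx`, and on `cx + m` the functional
is `c‖x‖²`, which is additive.
-/

open Filter Set

/-- The norm derivative `ρ'₊(x,y) = lim_{t→0⁺} ‖x‖(‖x+ty‖−‖x‖)/t`.
(This one-sided limit always exists by convexity of the norm, so `limUnder` picks it.) -/
noncomputable def rhoP {X : Type*} [NormedAddCommGroup X] [NormedSpace ℝ X] (x y : X) : ℝ :=
  limUnder (nhdsWithin (0 : ℝ) (Set.Ioi 0))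
    (fun t : ℝ => ‖x‖ * (‖x + t • y‖ - ‖x‖) / t)

/-- The norm derivative `ρ'₋(x,y) = lim_{t→0⁻} ‖x‖(‖x+ty‖−‖x‖)/t`. -/
noncomputable def rhoM {X : Type*} [NormedAddCommGroup X] [NormedSpace ℝ X] (x y : X) : ℝ :=
  limUnder (nhdsWithin (0 : ℝ) (Set.Iio 0))
    (fun t : ℝ => ‖x‖ * (‖x + t • y‖ - ‖x‖) / t)

/-- `ρ'(x,y) = (ρ'₊(x,y) + ρ'₋(x,y))/2`. -/
noncomputable def rho {X : Type*} [NormedAddCommGroup X] [NormedSpace ℝ X] (x y : X) : ℝ :=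
  (rhoP x y + rhoM x y) / 2

/-- The set of support functionals at `x`. -/
def suppJ {X : Type*} [NormedAddCommGroup X] [NormedSpace ℝ X] (x : X) :
    Set (X →L[ℝ] ℝ) :=
  {f | ‖f‖ = 1 ∧ f x = ‖x‖}

open Topology

section Algebra

variable {K E : Type*} [Field K] [AddCommGroup E] [Module K E]

theorem Submodule.exists_smul_add_of_isCoatom {M : Submodule K E} (hM : IsCoatom M) {x : E}
    (hx : x ∉ M) (y : E) : ∃ c : K, ∃ m ∈ M, y = c • x + m := by
  have hsup : M ⊔ K ∙ x = ⊤ :=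
    hM.2 _ (left_lt_sup.2 fun hle => hx (hle (Submodule.mem_span_singleton_self x)))
  obtain ⟨m, hm, z, hz, rfl⟩ := Submodule.mem_sup.mp (hsup ▸ Submodule.mem_top : y ∈ M ⊔ K ∙ x)
  obtain ⟨c, rfl⟩ := Submodule.mem_span_singleton.mp hz
  exact ⟨c, m, hm, add_comm _ _⟩

theorem map_add_of_isCoatom {f : E → K} {x : E}
    (hf : ∀ (c : K) (y : E), f (c • x + y) = c * f x + f y) {M : Submodule K E}
    (hM : IsCoatom M) (hx : x ∉ M) (hfM : ∀ m ∈ M, f m = 0) (u v : E) :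
    f (u + v) = f u + f v := by
  obtain ⟨a, m, hm, rfl⟩ := Submodule.exists_smul_add_of_isCoatom hM hx u
  obtain ⟨b, n, hn, rfl⟩ := Submodule.exists_smul_add_of_isCoatom hM hx v
  have hsum : a • x + m + (b • x + n) = (a + b) • x + (m + n) := by module
  rw [hsum, hf, hf, hf, hfM _ (M.add_mem hm hn), hfM m hm, hfM n hn]
  ring

end Algebra

theorem map_smul_of_map_add_of_smul_pos {E : Type*} [AddCommGroup E] [Module ℝ E] {f : E → ℝ}
    (hadd : ∀ u v, f (u + v) = f u + f v) (hpos : ∀ c : ℝ, 0 < c → ∀ u, f (c • u) = c * f u)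
    (c : ℝ) (u : E) : f (c • u) = c * f u := by
  have h0 : f 0 = 0 := by linarith [add_zero (0 : E) ▸ hadd 0 0]
  rcases lt_trichotomy c 0 with hc | rfl | hc
  · have hsum : f (c • u) + f ((-c) • u) = 0 := by
      rw [← hadd, ← add_smul, add_neg_cancel, zero_smul, h0]
    linarith [hpos _ (neg_pos.2 hc) u]
  · simpa using h0
  · exact hpos c hc u

section NormDerivative

variable {X : Type*} [NormedAddCommGroup X] [NormedSpace ℝ X]

theorem convexOn_norm_add_smul (x y : X) : ConvexOn ℝ univ (fun t : ℝ => ‖x + t • y‖) := by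
  have h := convexOn_univ_norm.comp_affineMap (AffineMap.lineMap (k := ℝ) x (x + y))
  refine (preimage_univ ▸ h).congr fun t _ => ?_
  simp [AffineMap.lineMap_apply, add_comm]

theorem tendsto_rhoM (x y : X) :
    Tendsto (fun t : ℝ => ‖x‖ * (‖x + t • y‖ - ‖x‖) / t) (𝓝[<] 0) (𝓝 (rhoM x y)) := by
  set g : ℝ → ℝ := fun t => ‖x + t • y‖
  have hslope := (convexOn_norm_add_smul x y).slope_mono (mem_univ 0)
  have hmono : MonotoneOn (slope g 0) (Iio 0) :=
    hslope.mono fun t ht => ⟨mem_univ t, ne_of_lt ht⟩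
  have hbdd : BddAbove (slope g 0 '' Iio 0) := by
    refine ⟨slope g 0 1, ?_⟩
    rintro _ ⟨t, ht, rfl⟩
    exact hslope ⟨mem_univ t, ne_of_lt ht⟩ ⟨mem_univ 1, one_ne_zero⟩ (ht.trans one_pos).le
  have hquot : (fun t : ℝ => ‖x‖ * (‖x + t • y‖ - ‖x‖) / t) = fun t => ‖x‖ * slope g 0 t := by
    funext t
    simp [g, slope_def_field, mul_div_assoc]
  have h := hquot ▸ (hmono.tendsto_nhdsLT hbdd).const_mul ‖x‖
  rwa [rhoM, h.limUnder_eq]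

theorem rhoM_eq_of_eventuallyEq_comp {x y z : X} {φ : ℝ → ℝ}
    (hφ : Tendsto φ (𝓝[<] 0) (𝓝[<] 0)) {a b : ℝ}
    (h : ∀ᶠ t in 𝓝[<] 0,
      a * (‖x‖ * (‖x + φ t • y‖ - ‖x‖) / φ t) + b = ‖x‖ * (‖x + t • z‖ - ‖x‖) / t) :
    rhoM x z = a * rhoM x y + b :=
  ((((tendsto_rhoM x y).comp hφ).const_mul a).add_const b).congr' h |>.limUnder_eq

theorem rhoM_smul_of_pos (x : X) {c : ℝ} (hc : 0 < c) (y : X) :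
    rhoM x (c • y) = c * rhoM x y := by
  have hφ : Tendsto (fun t : ℝ => c * t) (𝓝[<] 0) (𝓝[<] 0) := by
    refine tendsto_nhdsWithin_of_tendsto_nhds_of_eventually_within _ ?_ ?_
    · simpa using ((continuous_const_mul c).tendsto 0).mono_left nhdsWithin_le_nhds
    · filter_upwards [self_mem_nhdsWithin] with t (ht : t < 0)
      exact mul_neg_of_pos_of_neg hc ht
  simpa using rhoM_eq_of_eventuallyEq_comp (b := 0) hφ <| by
    filter_upwards [self_mem_nhdsWithin] with t (ht : t < 0)
    rw [add_zero, smul_smul, mul_comm t c]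
    field_simp [ht.ne]

theorem rhoM_zero (x : X) : rhoM x 0 = 0 := by
  have h := rhoM_smul_of_pos x two_pos (0 : X)
  rw [smul_zero] at h
  linarith

-- The substitution `s = t / (1 + α t)` turns `x + t • (α • x + y)` into `(1 + α t) • (x + s • y)`.
theorem rhoM_smul_self_add (x : X) (α : ℝ) (y : X) :
    rhoM x (α • x + y) = α * ‖x‖ ^ 2 + rhoM x y := by
  have hpos : ∀ᶠ t in 𝓝[<] (0 : ℝ), 0 < 1 + α * t := by
    have hcont : ContinuousAt (fun t : ℝ => 1 + α * t) 0 := by fun_prop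
    exact eventually_nhdsWithin_of_eventually_nhds <|
      continuousAt_const.eventually_lt hcont (by simp)
  have hφ : Tendsto (fun t : ℝ => t / (1 + α * t)) (𝓝[<] 0) (𝓝[<] 0) := by
    refine tendsto_nhdsWithin_of_tendsto_nhds_of_eventually_within _ ?_ ?_
    · have hcont : ContinuousAt (fun t : ℝ => t / (1 + α * t)) 0 :=
        continuousAt_id.div (by fun_prop) (by simp)
      simpa using hcont.tendsto.mono_left nhdsWithin_le_nhds
    · filter_upwards [self_mem_nhdsWithin, hpos] with t (ht : t < 0) h1
      exact div_neg_of_neg_of_pos ht h1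
  have := rhoM_eq_of_eventuallyEq_comp (a := 1) (b := α * ‖x‖ ^ 2) hφ <| by
    filter_upwards [self_mem_nhdsWithin, hpos] with t (ht : t < 0) h1
    have hline : x + t • (α • x + y) = (1 + α * t) • (x + (t / (1 + α * t)) • y) := by
      rw [smul_add (1 + α * t), smul_smul (1 + α * t), mul_div_cancel₀ _ h1.ne']
      module
    rw [hline, norm_smul, Real.norm_of_nonneg h1.le]
    field_simp [ht.ne]
    ring
  linarith

theorem rhoM_self (x : X) : rhoM x x = ‖x‖ ^ 2 := by
  simpa [rhoM_zero] using rhoM_smul_self_add x 1 0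

end NormDerivative

/-- x is ρ₋-smooth iff its ρ₋-orthogonality set is a linear subspace of codimension one. -/
theorem rhoM_smooth_iff_orthogonal_set_maximal_subspace
    {X : Type*} [NormedAddCommGroup X] [NormedSpace ℝ X] (x : X) (hx : x ≠ 0) :
    (∀ y₁ y₂ : X, rhoM x (y₁ + y₂) = rhoM x y₁ + rhoM x y₂) ↔
      ∃ M : Submodule ℝ X, (M : Set X) = {y : X | rhoM x y = 0} ∧ IsCoatom M := by
  have hxx : rhoM x x ≠ 0 := by rw [rhoM_self]; positivity
  have hline (c : ℝ) (y : X) : rhoM x (c • x + y) = c * rhoM x x + rhoM x y := by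
    rw [rhoM_smul_self_add, rhoM_self]
  constructor
  · intro hadd
    let F : X →ₗ[ℝ] ℝ :=
      { toFun := rhoM x
        map_add' := hadd
        map_smul' := map_smul_of_map_add_of_smul_pos hadd fun _ hc => rhoM_smul_of_pos x hc }
    have hF : F ≠ 0 := fun h => hxx (LinearMap.congr_fun h x)
    exact ⟨LinearMap.ker F, rfl, LinearMap.isCoatom_ker_of_surjective (LinearMap.surjective hF)⟩
  · rintro ⟨M, hM, hcoatom⟩
    have hzero (m : X) (hm : m ∈ M) : rhoM x m = 0 := by
      simpa using (hM ▸ hm : m ∈ {y : X | rhoM x y = 0})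
    exact map_add_of_isCoatom hline hcoatom (fun hxM => hxx (hzero x hxM)) hzero
end

section
/- Let X be a real normed linear space and let x ∈ X with x ≠ 0. Then x is ρ-smooth if and only if the set x^{⊥ρ} = {y ∈ X : ρ'(x,y) = 0} is a linear subspace of X of codimension one (i.e., a maximal proper linear subspace of X). -/
open Filter Set

/-!
The norm derivatives `ρ'₊(x, y)` and `ρ'₋(x, y)` are the one-sided derivatives at `0` of the
convex function `t ↦ ‖x‖ * ‖x + t • y‖`. This makes `ρ'(x, ·)` homogeneous, and the identity
`‖x + t • (y + c • x)‖ = (1 + t * c) * ‖x + (t / (1 + t * c)) • y‖` gives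
`ρ'(x, y + c • x) = ρ'(x, y) + c * ‖x‖ ^ 2`.

If `ρ'(x, ·)` is additive it is a linear functional with `ρ'(x, x) = ‖x‖ ^ 2 ≠ 0`, so its kernel
`x^{⊥ρ}` is a hyperplane. Conversely, every `y` splits as an element of `x^{⊥ρ}` plus
`(ρ'(x, y) / ‖x‖ ^ 2) • x`, so once `x^{⊥ρ}` is closed under addition, `ρ'(x, ·)` is additive.
-/

open Topology

lemma map_add_of_map_add_smul {K V : Type*} [Field K] [AddCommGroup V] [Module K V]
    {f : V → K} {x : V} (hx : f x ≠ 0) (hf : ∀ y (c : K), f (y + c • x) = f y + c * f x)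
    (hzero : ∀ y z, f y = 0 → f z = 0 → f (y + z) = 0) (y z : V) :
    f (y + z) = f y + f z := by
  have hker : ∀ y, f (y + (-(f y / f x)) • x) = 0 := fun y => by
    rw [hf]; field_simp; ring
  have hsplit : y + z = (y + (-(f y / f x)) • x + (z + (-(f z / f x)) • x)) +
      (f y / f x + f z / f x) • x := by
    module
  rw [hsplit, hf, hzero _ _ (hker y) (hker z), zero_add]
  field_simp

section NormDerivative

variable {X : Type*} [NormedAddCommGroup X] [NormedSpace ℝ X]

noncomputable def normLine (x y : X) (t : ℝ) : ℝ := ‖x‖ * ‖x + t • y‖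

lemma convexOn_normLine (x y : X) : ConvexOn ℝ univ (normLine x y) := by
  have h : ConvexOn ℝ univ fun t : ℝ => ‖x + t • y‖ := by
    simpa [Function.comp_def, AffineMap.lineMap_apply, add_comm] using
      (convexOn_norm convex_univ).comp_affineMap (AffineMap.lineMap x (x + y) : ℝ →ᵃ[ℝ] X)
  exact h.smul (norm_nonneg x)

lemma slope_normLine (x y : X) :
    slope (normLine x y) 0 = fun t => ‖x‖ * (‖x + t • y‖ - ‖x‖) / t := by
  ext t
  simp [slope_def_field, normLine, mul_sub]

lemma hasDerivWithinAt_normLine_Ioi (x y : X) :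
    HasDerivWithinAt (normLine x y) (rhoP x y) (Ioi 0) 0 := by
  have h := (convexOn_normLine x y).hasDerivWithinAt_rightDeriv_of_mem_interior
    (x := 0) (by simp)
  rw [hasDerivWithinAt_iff_tendsto_slope' self_notMem_Ioi] at h ⊢
  rwa [rhoP, ← slope_normLine, h.limUnder_eq]

lemma hasDerivWithinAt_normLine_Iio (x y : X) :
    HasDerivWithinAt (normLine x y) (rhoM x y) (Iio 0) 0 := by
  have h := (convexOn_normLine x y).hasDerivWithinAt_leftDeriv_of_mem_interior
    (x := 0) (by simp)
  rw [hasDerivWithinAt_iff_tendsto_slope' self_notMem_Iio] at h ⊢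
  rwa [rhoM, ← slope_normLine, h.limUnder_eq]

lemma rhoP_eq_derivWithin (x y : X) : rhoP x y = derivWithin (normLine x y) (Ioi 0) 0 :=
  ((hasDerivWithinAt_normLine_Ioi x y).derivWithin (uniqueDiffWithinAt_Ioi 0)).symm

lemma rhoM_eq_derivWithin (x y : X) : rhoM x y = derivWithin (normLine x y) (Iio 0) 0 :=
  ((hasDerivWithinAt_normLine_Iio x y).derivWithin (uniqueDiffWithinAt_Iio 0)).symm

lemma rhoM_eq_neg_rhoP_neg (x y : X) : rhoM x y = -rhoP x (-y) := by
  have h : normLine x y = fun t => normLine x (-y) (-t) := by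
    ext t; simp [normLine]
  rw [rhoM_eq_derivWithin, rhoP_eq_derivWithin, h, derivWithin_comp_neg, neg_Iio, neg_zero]

lemma rhoP_zero (x : X) : rhoP x 0 = 0 := by
  have h : normLine x 0 = Function.const ℝ (‖x‖ * ‖x‖) := by
    ext t; simp [normLine]
  rw [rhoP_eq_derivWithin, h, derivWithin_const, Pi.zero_apply]

lemma rhoP_smul_of_pos (x y : X) {c : ℝ} (hc : 0 < c) : rhoP x (c • y) = c * rhoP x y := by
  have h : normLine x (c • y) = fun t => normLine x y (c * t) := by
    ext t; simp [normLine, smul_smul, mul_comm]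
  rw [rhoP_eq_derivWithin, rhoP_eq_derivWithin, h, derivWithin_comp_mul_left,
    LinearOrderedField.smul_Ioi hc, mul_zero, smul_eq_mul]

lemma rhoP_add_smul_self (x y : X) (c : ℝ) :
    rhoP x (y + c • x) = rhoP x y + c * ‖x‖ ^ 2 := by
  set u : ℝ → ℝ := fun t => t / (1 + t * c)
  have hden : ∀ᶠ t in 𝓝[>] (0 : ℝ), 0 < 1 + t * c :=
    nhdsWithin_le_nhds <| (tendsto_const_nhds.add (tendsto_id.mul_const c)).eventually_const_lt
      (by simp)
  have hu : Tendsto u (𝓝[>] 0) (𝓝[>] 0) := by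
    refine tendsto_nhdsWithin_iff.2 ⟨?_, ?_⟩
    · have : ContinuousAt u 0 := continuousAt_id.div (by fun_prop) (by simp)
      simpa [u] using this.tendsto.mono_left nhdsWithin_le_nhds
    · filter_upwards [hden, self_mem_nhdsWithin] with t ht ht0 using div_pos ht0 ht
  have hslope : slope (normLine x (y + c • x)) 0 =ᶠ[𝓝[>] 0]
      fun t => slope (normLine x y) 0 (u t) + c * ‖x‖ ^ 2 := by
    filter_upwards [hden, self_mem_nhdsWithin] with t ht htpos
    have ht0 : t ≠ 0 := htpos.ne'
    have hline : x + t • (y + c • x) = (1 + t * c) • (x + u t • y) := by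
      simp only [u]; match_scalars <;> field_simp
    simp only [slope_normLine, u, hline, norm_smul, Real.norm_of_nonneg ht.le]
    field_simp
    ring
  have h := (hasDerivWithinAt_iff_tendsto_slope' self_notMem_Ioi).1
    (hasDerivWithinAt_normLine_Ioi x y)
  exact tendsto_nhds_unique
    ((hasDerivWithinAt_iff_tendsto_slope' self_notMem_Ioi).1 (hasDerivWithinAt_normLine_Ioi x _))
    (((h.comp hu).add_const _).congr' hslope.symm)

lemma rho_eq_rhoP_sub_rhoP_neg (x y : X) : rho x y = (rhoP x y - rhoP x (-y)) / 2 := by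
  rw [rho, rhoM_eq_neg_rhoP_neg, sub_eq_add_neg]

lemma rho_smul (x y : X) (c : ℝ) : rho x (c • y) = c * rho x y := by
  simp only [rho_eq_rhoP_sub_rhoP_neg]
  rcases lt_trichotomy c 0 with hc | rfl | hc
  · have hc' : 0 < -c := neg_pos.2 hc
    rw [show c • y = (-c) • -y by module, show -((-c) • -y) = (-c) • y by module,
      rhoP_smul_of_pos x _ hc', rhoP_smul_of_pos x _ hc']
    ring
  · simp [rhoP_zero]
  · rw [← smul_neg, rhoP_smul_of_pos x _ hc, rhoP_smul_of_pos x _ hc]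
    ring

lemma rho_add_smul_self (x y : X) (c : ℝ) : rho x (y + c • x) = rho x y + c * ‖x‖ ^ 2 := by
  simp only [rho_eq_rhoP_sub_rhoP_neg]
  rw [show -(y + c • x) = -y + (-c) • x by module, rhoP_add_smul_self, rhoP_add_smul_self]
  ring

lemma rho_self (x : X) : rho x x = ‖x‖ ^ 2 := by
  have h0 : rho x 0 = 0 := by simpa using rho_smul x 0 0
  simpa [h0] using rho_add_smul_self x 0 1

end NormDerivative

/-- x is ρ-smooth iff its ρ-orthogonality set is a linear subspace of codimension one. -/
theorem rho_smooth_iff_orthogonal_set_maximal_subspace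
    {X : Type*} [NormedAddCommGroup X] [NormedSpace ℝ X] (x : X) (hx : x ≠ 0) :
    (∀ y₁ y₂ : X, rho x (y₁ + y₂) = rho x y₁ + rho x y₂) ↔
      ∃ M : Submodule ℝ X, (M : Set X) = {y : X | rho x y = 0} ∧ IsCoatom M := by
  have hxx : rho x x ≠ 0 := by
    rw [rho_self]; exact pow_ne_zero 2 (norm_ne_zero_iff.2 hx)
  constructor
  · intro hadd
    let f : X →ₗ[ℝ] ℝ := ⟨⟨rho x, hadd⟩, fun c y => rho_smul x y c⟩
    have hf : f ≠ 0 := fun h => hxx (LinearMap.congr_fun h x)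
    exact ⟨LinearMap.ker f, rfl, LinearMap.isCoatom_ker_of_surjective (LinearMap.surjective hf)⟩
  · rintro ⟨M, hM, -⟩
    have hmem : ∀ y, y ∈ M ↔ rho x y = 0 := fun y => Set.ext_iff.1 hM y
    refine map_add_of_map_add_smul hxx (fun y c => by rw [rho_add_smul_self, rho_self]) ?_
    intro y z hy hz
    exact (hmem _).1 (M.add_mem ((hmem y).2 hy) ((hmem z).2 hz))
end

section
/- Let H be a real Hilbert space and let T be a nonzero compact bounded linear operator on H, regarded as an element of the normed space K(H) of compact operators with the operator norm. Then T is ρ₊-smooth in K(H) if and only if there exists a unit vector x₀ ∈ H such that M_T = {x₀, −x₀}. -/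
open Filter Set

set_option synthInstance.maxHeartbeats 1000000

/-- The normed space K(H) of compact operators on H, as a submodule of H →L[ℝ] H. -/
noncomputable abbrev KH (H : Type*) [NormedAddCommGroup H] [InnerProductSpace ℝ H] :
    Submodule ℝ (H →L[ℝ] H) :=
  compactOperator (RingHom.id ℝ) H H

/-!
For compact `T ≠ 0`, `ρ'₊(T, A) = max {⟪T z, A z⟫ : z ∈ M_T}`. The lower bound holds for each
`z ∈ M_T` because `‖T + t A‖ ≥ ‖(T + t A) z‖`; for the upper bound, norm-attaining unit vectors of
`T + t A` accumulate, by compactness, at some `z ∈ M_T` as `t → 0⁺`. If `M_T = {x₀, -x₀}` the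
maximum is the linear functional `A ↦ ⟪T x₀, A x₀⟫`. Conversely, additivity forces
`ρ'₊(T, -A) = -ρ'₊(T, A)`, so `⟪T z, A z⟫` does not depend on `z ∈ M_T`; testing this on
`A = T ∘ (x₀ ⊗ x₀)` gives equality in Cauchy–Schwarz for `x₀` and `z`, i.e. `z = ±x₀`.
-/

open Topology
open scoped RealInnerProductSpace InnerProduct
open ContinuousLinearMap InnerProductSpace

section NormDerivative
variable {X : Type*} [NormedAddCommGroup X] [NormedSpace ℝ X]

theorem tendsto_rhoP (x y : X) :
    Tendsto (fun t : ℝ => ‖x‖ * (‖x + t • y‖ - ‖x‖) / t) (𝓝[>] 0) (𝓝 (rhoP x y)) := by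
  suffices ∃ d, Tendsto (fun t : ℝ => ‖x‖ * (‖x + t • y‖ - ‖x‖) / t) (𝓝[>] 0) (𝓝 d) by
    obtain ⟨d, hd⟩ := this
    rwa [rhoP, hd.limUnder_eq]
  have hconv : ConvexOn ℝ univ (fun t : ℝ => ‖x + t • y‖) :=
    (convexOn_univ_norm.translate_right x).comp_linearMap (LinearMap.toSpanSingleton ℝ X y)
  have hslope := hconv.hasDerivWithinAt_sInf_slope_of_mem_interior (x := 0) (by simp)
  rw [hasDerivWithinAt_iff_tendsto_slope' self_notMem_Ioi] at hslope
  exact ⟨_, (hslope.const_mul ‖x‖).congr fun t => by simp [slope_def_field, mul_div_assoc]⟩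

theorem rhoP_zero_right (x : X) : rhoP x (0 : X) = 0 := by
  simp only [rhoP, smul_zero, add_zero, sub_self, mul_zero, zero_div]
  exact tendsto_const_nhds.limUnder_eq

theorem Submodule.rhoP_coe (p : Submodule ℝ X) (x y : p) : rhoP x y = rhoP (x : X) y := rfl

end NormDerivative

section NormAttainment
variable {E F : Type*} [NormedAddCommGroup E] [NormedSpace ℝ E] [NormedAddCommGroup F]
  [NormedSpace ℝ F] {T : E →L[ℝ] F} {x : E}

def normAttainSet (T : E →L[ℝ] F) : Set E := {x | ‖x‖ = 1 ∧ ‖T x‖ = ‖T‖}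

theorem neg_mem_normAttainSet (hx : x ∈ normAttainSet T) : -x ∈ normAttainSet T := by
  simpa [normAttainSet] using hx

theorem mem_normAttainSet_of_norm_le_one (hT : T ≠ 0) (hx : ‖x‖ ≤ 1) (hTx : ‖T x‖ = ‖T‖) :
    x ∈ normAttainSet T := by
  refine ⟨le_antisymm hx ?_, hTx⟩
  have : ‖T‖ * 1 ≤ ‖T‖ * ‖x‖ := by simpa [hTx] using T.le_opNorm x
  exact le_of_mul_le_mul_left this (norm_pos_iff.2 hT)

theorem tendsto_norm_apply_of_tendsto {B : ℕ → E →L[ℝ] F} (hB : Tendsto B atTop (𝓝 T))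
    {x : ℕ → E} (hx : ∀ n, ‖x n‖ ≤ 1) (hBx : ∀ n, ‖B n (x n)‖ = ‖B n‖) :
    Tendsto (fun n => ‖T (x n)‖) atTop (𝓝 ‖T‖) := by
  have hlow : Tendsto (fun n => ‖B n‖ - ‖B n - T‖) atTop (𝓝 ‖T‖) := by
    simpa using hB.norm.sub (tendsto_iff_norm_sub_tendsto_zero.1 hB)
  refine tendsto_of_tendsto_of_tendsto_of_le_of_le hlow tendsto_const_nhds (fun n => ?_)
    (fun n => T.unit_le_opNorm _ (hx n))
  calc ‖B n‖ - ‖B n - T‖ = ‖T (x n) + (B n - T) (x n)‖ - ‖B n - T‖ := by simp [hBx]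
    _ ≤ ‖T (x n)‖ := by linarith [norm_add_le (T (x n)) ((B n - T) (x n)),
      (B n - T).unit_le_opNorm _ (hx n)]

end NormAttainment

section NormedDomain
variable {E F : Type*} [NormedAddCommGroup E] [NormedSpace ℝ E] [NormedAddCommGroup F]
  [InnerProductSpace ℝ F] {T A : E →L[ℝ] F} {z : E}

theorem inner_apply_le_rhoP (hz : z ∈ normAttainSet T) : ⟪T z, A z⟫ ≤ rhoP T A := by
  refine ge_of_tendsto (tendsto_rhoP T A) (eventually_nhdsWithin_of_forall fun t (ht : 0 < t) => ?_)
  have key : ‖T‖ ^ 2 + t * ⟪T z, A z⟫ ≤ ‖T‖ * ‖T + t • A‖ :=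
    calc ‖T‖ ^ 2 + t * ⟪T z, A z⟫ = ⟪T z, (T + t • A) z⟫ := by
          simp [inner_add_right, real_inner_smul_right, hz.2]
      _ ≤ ‖T z‖ * ‖(T + t • A) z‖ := real_inner_le_norm _ _
      _ ≤ ‖T‖ * ‖T + t • A‖ := by
          rw [hz.2]
          exact mul_le_mul_of_nonneg_left ((T + t • A).unit_le_opNorm _ hz.1.le) (norm_nonneg _)
  rw [le_div_iff₀ ht]
  linarith

theorem inner_apply_eq_rhoP_of_rhoP_neg (hz : z ∈ normAttainSet T)
    (hneg : rhoP T (-A) = -rhoP T A) : ⟪T z, A z⟫ = rhoP T A := by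
  have h := inner_apply_le_rhoP (A := -A) hz
  rw [hneg, neg_apply, inner_neg_right, neg_le_neg_iff] at h
  exact le_antisymm (inner_apply_le_rhoP hz) h

end NormedDomain

section InnerProduct
variable {E F : Type*} [NormedAddCommGroup E] [InnerProductSpace ℝ E] [NormedAddCommGroup F]
  [InnerProductSpace ℝ F] {T A : E →L[ℝ] F} {x₀ z : E}

/-- The hypothesis reads `⟪x₀, z⟫ * ⟪T z, T x₀⟫ = ‖T‖²`, which forces equality in Cauchy–Schwarz
for `x₀` and `z`. -/
theorem eq_or_eq_neg_of_inner_apply_comp_rankOne_eq (hT0 : T ≠ 0)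
    (hx₀ : x₀ ∈ normAttainSet T) (hz : z ∈ normAttainSet T)
    (h : ⟪T z, (T ∘L rankOne ℝ x₀ x₀) z⟫ = ⟪T x₀, (T ∘L rankOne ℝ x₀ x₀) x₀⟫) :
    z = x₀ ∨ z = -x₀ := by
  simp only [comp_apply, rankOne_apply, map_smul, real_inner_smul_right,
    real_inner_self_eq_norm_sq, hx₀.1, hx₀.2] at h
  have hTz : |⟪T z, T x₀⟫| ≤ ‖T‖ ^ 2 := by
    simpa [hz.2, hx₀.2, sq] using abs_real_inner_le_norm (T z) (T x₀)
  have hx₀z : |⟪x₀, z⟫| ≤ 1 := by simpa [hx₀.1, hz.1] using abs_real_inner_le_norm x₀ z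
  have habs : |⟪x₀, z⟫| = 1 := by
    refine le_antisymm hx₀z (le_of_mul_le_mul_right ?_ (pow_pos (norm_pos_iff.2 hT0) 2))
    calc 1 * ‖T‖ ^ 2 = |⟪x₀, z⟫| * |⟪T z, T x₀⟫| := by rw [← abs_mul, h]; simp
      _ ≤ |⟪x₀, z⟫| * ‖T‖ ^ 2 := mul_le_mul_of_nonneg_left hTz (abs_nonneg _)
  rcases abs_eq zero_le_one |>.1 habs with h1 | h1
  · exact .inl ((inner_eq_one_iff_of_norm_eq_one hx₀.1 hz.1).1 h1).symm
  · exact .inr ((inner_eq_neg_one_iff_of_norm_eq_one hz.1 hx₀.1).1 (real_inner_comm x₀ z ▸ h1))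

theorem norm_add_smul_mul_sub_le {t : ℝ} {x : E} (hx : ‖x‖ ≤ 1)
    (hBx : ‖(T + t • A) x‖ = ‖T + t • A‖) :
    ‖T + t • A‖ * (‖T + t • A‖ - ‖T‖) ≤ t * ⟪(T + t • A) x, A x⟫ := by
  set b := (T + t • A) x
  have hb : ‖b‖ ^ 2 = ⟪b, T x⟫ + t * ⟪b, A x⟫ := by
    rw [← real_inner_self_eq_norm_sq, ← real_inner_smul_right, ← inner_add_right]
    simp [b]
  have hTx : ⟪b, T x⟫ ≤ ‖b‖ * ‖T‖ :=
    (real_inner_le_norm _ _).trans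
      (mul_le_mul_of_nonneg_left (T.unit_le_opNorm _ hx) (norm_nonneg _))
  rw [← hBx]
  nlinarith

end InnerProduct

theorem IsCompactOperator.exists_subseq_tendsto {𝕜 E F : Type*} [NontriviallyNormedField 𝕜]
    [NormedAddCommGroup E] [NormedSpace 𝕜 E] [NormedAddCommGroup F] [NormedSpace 𝕜 F]
    {f : E →L[𝕜] F} (hf : IsCompactOperator f) {x : ℕ → E} {r : ℝ} (hx : ∀ n, ‖x n‖ ≤ r) :
    ∃ y, ∃ φ : ℕ → ℕ, StrictMono φ ∧ Tendsto (fun n => f (x (φ n))) atTop (𝓝 y) := by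
  obtain ⟨K, hK, hfK⟩ := hf.image_closedBall_subset_compact (f := (f : E →ₗ[𝕜] F)) r
  obtain ⟨y, -, φ, hφ, hy⟩ :=
    hK.tendsto_subseq fun n => hfK ⟨x n, by simpa using hx n, rfl⟩
  exact ⟨y, φ, hφ, hy⟩

section Hilbert
variable {E F : Type*} [NormedAddCommGroup E] [InnerProductSpace ℝ E] [CompleteSpace E]
  [NormedAddCommGroup F] [InnerProductSpace ℝ F] [CompleteSpace F] {T A : E →L[ℝ] F}

theorem norm_adjoint_comp_self_apply_sub_sq_le (T : E →L[ℝ] F) {x : E} (hx : ‖x‖ ≤ 1) :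
    ‖(T† ∘L T) x - ‖T‖ ^ 2 • x‖ ^ 2 ≤ 2 * ‖T‖ ^ 2 * (‖T‖ ^ 2 - ‖T x‖ ^ 2) := by
  have hinner : ⟪(T† ∘L T) x, x⟫ = ‖T x‖ ^ 2 := by
    simpa using (T.apply_norm_sq_eq_inner_adjoint_left x).symm
  have hS : ‖(T† ∘L T) x‖ ≤ ‖T‖ ^ 2 := by
    simpa [norm_adjoint_comp_self, sq] using (T† ∘L T).unit_le_opNorm x hx
  have hx2 : ‖x‖ ^ 2 ≤ 1 := pow_le_one₀ (norm_nonneg x) hx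
  rw [norm_sub_sq_real, real_inner_smul_right, norm_smul, hinner,
    Real.norm_of_nonneg (by positivity)]
  nlinarith [norm_nonneg ((T† ∘L T) x), sq_nonneg ‖T‖]

/-- Since `‖T† T xₙ - ‖T‖² xₙ‖ → 0`, compactness of `T† T` makes `‖T‖² xₙ` converge along a
subsequence. -/
theorem IsCompactOperator.exists_subseq_tendsto_mem_normAttainSet (hT : IsCompactOperator T)
    (hT0 : T ≠ 0) {x : ℕ → E} (hx : ∀ n, ‖x n‖ ≤ 1)
    (hlim : Tendsto (fun n => ‖T (x n)‖) atTop (𝓝 ‖T‖)) :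
    ∃ z ∈ normAttainSet T, ∃ φ : ℕ → ℕ, StrictMono φ ∧ Tendsto (x ∘ φ) atTop (𝓝 z) := by
  set c := ‖T‖ ^ 2
  have hc : c ≠ 0 := pow_ne_zero 2 (norm_ne_zero_iff.2 hT0)
  obtain ⟨y, φ, hφ, hy⟩ := (hT.clm_comp (adjoint T)).exists_subseq_tendsto (f := T† ∘L T) hx
  have hsmall : Tendsto (fun n => (T† ∘L T) (x n) - c • x n) atTop (𝓝 0) := by
    rw [tendsto_zero_iff_norm_tendsto_zero]
    have hbound : Tendsto (fun n => √(2 * c * (c - ‖T (x n)‖ ^ 2))) atTop (𝓝 0) := by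
      simpa [c] using (((tendsto_const_nhds (x := c)).sub (hlim.pow 2)).const_mul (2 * c)).sqrt
    refine squeeze_zero (fun n => norm_nonneg _) (fun n => ?_) hbound
    exact Real.le_sqrt_of_sq_le (norm_adjoint_comp_self_apply_sub_sq_le T (hx n))
  have hcx : Tendsto (fun n => c • x (φ n)) atTop (𝓝 y) := by
    simpa using hy.sub (hsmall.comp hφ.tendsto_atTop)
  have hxz : Tendsto (x ∘ φ) atTop (𝓝 (c⁻¹ • y)) := by
    simpa [Function.comp_def, smul_smul, inv_mul_cancel₀ hc] using hcx.const_smul c⁻¹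
  refine ⟨c⁻¹ • y, mem_normAttainSet_of_norm_le_one hT0 ?_ ?_, φ, hφ, hxz⟩
  · exact le_of_tendsto' hxz.norm fun n => hx _
  · exact tendsto_nhds_unique ((T.continuous.tendsto _).comp hxz).norm
      (hlim.comp hφ.tendsto_atTop)

theorem IsCompactOperator.exists_norm_le_one_norm_apply_eq (hT : IsCompactOperator T) :
    ∃ x, ‖x‖ ≤ 1 ∧ ‖T x‖ = ‖T‖ := by
  rcases eq_or_ne T 0 with rfl | hT0
  · exact ⟨0, by simp, by simp⟩
  have happrox (n : ℕ) : ∃ x : E, ‖x‖ < 1 ∧ ‖T‖ - 1 / (n + 1) < ‖T x‖ :=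
    T.exists_lt_apply_of_lt_opNorm (sub_lt_self _ Nat.one_div_pos_of_nat)
  choose x hx hTx using happrox
  have hlim : Tendsto (fun n => ‖T (x n)‖) atTop (𝓝 ‖T‖) := by
    refine tendsto_of_tendsto_of_tendsto_of_le_of_le ?_ tendsto_const_nhds (fun n => (hTx n).le)
      (fun n => T.unit_le_opNorm _ (hx n).le)
    simpa using tendsto_const_nhds.sub (tendsto_one_div_add_atTop_nhds_zero_nat (𝕜 := ℝ))
  obtain ⟨z, hz, -⟩ := hT.exists_subseq_tendsto_mem_normAttainSet hT0 (fun n => (hx n).le) hlim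
  exact ⟨z, hz.1.le, hz.2⟩

theorem IsCompactOperator.normAttainSet_nonempty (hT : IsCompactOperator T) (hT0 : T ≠ 0) :
    (normAttainSet T).Nonempty :=
  let ⟨x, hx, hTx⟩ := hT.exists_norm_le_one_norm_apply_eq
  ⟨x, mem_normAttainSet_of_norm_le_one hT0 hx hTx⟩

theorem exists_mem_normAttainSet_rhoP_le (hT : IsCompactOperator T) (hA : IsCompactOperator A)
    (hT0 : T ≠ 0) : ∃ z ∈ normAttainSet T, rhoP T A ≤ ⟪T z, A z⟫ := by
  set t : ℕ → ℝ := fun n => 1 / (n + 1)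
  have ht : Tendsto t atTop (𝓝[>] 0) :=
    tendsto_nhdsWithin_iff.2 ⟨tendsto_one_div_add_atTop_nhds_zero_nat,
      Eventually.of_forall fun _ => mem_Ioi.2 Nat.one_div_pos_of_nat⟩
  set B : ℕ → E →L[ℝ] F := fun n => T + t n • A
  have hB : Tendsto B atTop (𝓝 T) := by
    simpa using tendsto_const_nhds.add ((tendsto_nhdsWithin_iff.1 ht).1.smul_const A)
  choose x hx hBx using fun n =>
    IsCompactOperator.exists_norm_le_one_norm_apply_eq (T := B n) (hT.add (hA.smul (t n)))
  obtain ⟨z, hz, φ, hφ, hxz⟩ :=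
    hT.exists_subseq_tendsto_mem_normAttainSet hT0 hx (tendsto_norm_apply_of_tendsto hB hx hBx)
  refine ⟨z, hz, le_of_mul_le_mul_right ?_ (norm_pos_iff.2 hT0)⟩
  have hBxφ : Tendsto (fun n => B (φ n) (x (φ n))) atTop (𝓝 (T z)) :=
    (isBoundedBilinearMap_apply.continuous.tendsto (T, z)).comp
      ((hB.comp hφ.tendsto_atTop).prodMk_nhds hxz)
  have hAxφ : Tendsto (fun n => A (x (φ n))) atTop (𝓝 (A z)) := (A.continuous.tendsto z).comp hxz
  have hlhs := ((tendsto_rhoP T A).comp (ht.comp hφ.tendsto_atTop)).mul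
    (hB.comp hφ.tendsto_atTop).norm
  have hrhs := (hBxφ.inner hAxφ).const_mul ‖T‖
  rw [mul_comm ⟪T z, A z⟫]
  refine le_of_tendsto_of_tendsto' hlhs hrhs fun n => ?_
  have hpos : 0 < t (φ n) := Nat.one_div_pos_of_nat
  have key := norm_add_smul_mul_sub_le (hx (φ n)) (hBx (φ n))
  simp only [Function.comp_apply]
  rw [div_mul_eq_mul_div, div_le_iff₀ hpos]
  nlinarith [norm_nonneg T]

theorem rhoP_eq_inner_of_normAttainSet_eq_pair (hT : IsCompactOperator T)
    (hA : IsCompactOperator A) (hT0 : T ≠ 0) {x₀ : E} (hM : normAttainSet T = {x₀, -x₀}) :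
    rhoP T A = ⟪T x₀, A x₀⟫ := by
  have hx₀ : x₀ ∈ normAttainSet T := hM ▸ mem_insert _ _
  obtain ⟨z, hz, hle⟩ := exists_mem_normAttainSet_rhoP_le hT hA hT0
  rw [hM] at hz
  refine le_antisymm ?_ (inner_apply_le_rhoP hx₀)
  rcases hz with rfl | rfl
  · exact hle
  · simpa using hle

end Hilbert

/-- A nonzero compact operator T on a real Hilbert space H is ρ₊-smooth in K(H) iff
its norm attainment set is { x₀, -x₀ } for some unit vector x₀. -/
theorem rhoP_smooth_iff_norm_attained_at_antipodal_pair
    {H : Type*} [NormedAddCommGroup H] [InnerProductSpace ℝ H] [CompleteSpace H]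
    (T : KH H) (hT : T ≠ 0) :
    (∀ A B : KH H, rhoP T (A + B) = rhoP T A + rhoP T B) ↔
      ∃ x₀ : H, ‖x₀‖ = 1 ∧
        {x : H | ‖x‖ = 1 ∧ ‖(T : H →L[ℝ] H) x‖ = ‖T‖} = {x₀, -x₀} := by
  have hT0 : (T : H →L[ℝ] H) ≠ 0 := by simpa using hT
  change _ ↔ ∃ x₀ : H, ‖x₀‖ = 1 ∧ normAttainSet (T : H →L[ℝ] H) = {x₀, -x₀}
  constructor
  · intro hadd
    have hneg (A : KH H) : rhoP T (-A) = -rhoP T A := by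
      linarith [hadd A (-A), congrArg (rhoP T) (add_neg_cancel A), rhoP_zero_right T]
    obtain ⟨x₀, hx₀⟩ := IsCompactOperator.normAttainSet_nonempty T.2 hT0
    refine ⟨x₀, hx₀.1, Subset.antisymm (fun z hz => ?_)
      (insert_subset hx₀ (singleton_subset_iff.2 (neg_mem_normAttainSet hx₀)))⟩
    let A : KH H := ⟨(T : H →L[ℝ] H) ∘L rankOne ℝ x₀ x₀, IsCompactOperator.comp_clm T.2 _⟩
    exact eq_or_eq_neg_of_inner_apply_comp_rankOne_eq hT0 hx₀ hz
      ((inner_apply_eq_rhoP_of_rhoP_neg hz (hneg A)).trans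
        (inner_apply_eq_rhoP_of_rhoP_neg hx₀ (hneg A)).symm)
  · rintro ⟨x₀, -, hM⟩ A B
    have hval (A : KH H) : rhoP T A = ⟪(T : H →L[ℝ] H) x₀, (A : H →L[ℝ] H) x₀⟫ :=
      rhoP_eq_inner_of_normAttainSet_eq_pair T.2 A.2 hT0 hM
    rw [hval, hval, hval, Submodule.coe_add, add_apply, inner_add_right]
end

section
/- In the space ℓ∞² (ℝ² with the norm ‖(a,b)‖ = max{|a|,|b|}), the point x = (1,1) is ρ-smooth but is neither ρ₊-smooth nor ρ₋-smooth; that is, the map y ↦ ρ'(x,y) is additive on ℓ∞², but neither y ↦ ρ'₊(x,y) nor y ↦ ρ'₋(x,y) is additive. -/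
open Filter Set

lemma norm_fin2 (v : Fin 2 → ℝ) : ‖v‖ = max |v 0| |v 1| := by
  rw [Pi.norm_def]
  rw [show (Finset.univ : Finset (Fin 2)) = {0, 1} by decide]
  simp [Finset.sup_insert, ← NNReal.coe_max]
  push_cast
  simp [Real.norm_eq_abs]

lemma norm_x : ‖(![1, 1] : Fin 2 → ℝ)‖ = 1 := by
  rw [norm_fin2]; norm_num

lemma key (y : Fin 2 → ℝ) (t : ℝ) (h : |t| * (|y 0| + |y 1|) < 1) :
    ‖(![1, 1] : Fin 2 → ℝ)‖ * (‖(![1, 1] : Fin 2 → ℝ) + t • y‖ - ‖(![1, 1] : Fin 2 → ℝ)‖) / t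
      = (max (1 + t * y 0) (1 + t * y 1) - 1) / t := by
  rw [norm_x, norm_fin2]
  have h0' : |1 + t * y 0| = 1 + t * y 0 := by
    rw [abs_of_nonneg]
    nlinarith [abs_nonneg (y 1), abs_nonneg t, neg_abs_le (t * y 0), abs_mul t (y 0)]
  have h1' : |1 + t * y 1| = 1 + t * y 1 := by
    rw [abs_of_nonneg]
    nlinarith [abs_nonneg (y 0), abs_nonneg t, neg_abs_le (t * y 1), abs_mul t (y 1)]
  simp only [Pi.add_apply, Pi.smul_apply, Matrix.cons_val_zero, Matrix.cons_val_one,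
    Matrix.head_cons, smul_eq_mul] at *
  rw [h0', h1']
  ring_nf

lemma small_mem : ∀ (y : Fin 2 → ℝ), {t : ℝ | |t| * (|y 0| + |y 1|) < 1} ∈ nhds (0:ℝ) := by
  intro y
  have : Continuous fun t : ℝ => |t| * (|y 0| + |y 1|) := by continuity
  have := this.tendsto 0
  simp only [abs_zero, zero_mul] at this
  exact this (Iio_mem_nhds one_pos)

lemma rhoP_eq (y : Fin 2 → ℝ) : rhoP (![1, 1] : Fin 2 → ℝ) y = max (y 0) (y 1) := by
  apply Filter.Tendsto.limUnder_eq
  apply Tendsto.congr' _ tendsto_const_nhds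
  filter_upwards [mem_nhdsWithin_of_mem_nhds (small_mem y), self_mem_nhdsWithin] with t ht ht'
  rw [key y t ht]
  have ht0 : (0:ℝ) < t := ht'
  have hmax : max (1 + t * y 0) (1 + t * y 1) = 1 + t * max (y 0) (y 1) := by
    rcases le_total (y 0) (y 1) with h | h
    · rw [max_eq_right h, max_eq_right]; nlinarith
    · rw [max_eq_left h, max_eq_left]; nlinarith
  rw [hmax, add_sub_cancel_left, mul_div_cancel_left₀ _ (ne_of_gt ht0)]

lemma rhoM_eq (y : Fin 2 → ℝ) : rhoM (![1, 1] : Fin 2 → ℝ) y = min (y 0) (y 1) := by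
  apply Filter.Tendsto.limUnder_eq
  apply Tendsto.congr' _ tendsto_const_nhds
  filter_upwards [mem_nhdsWithin_of_mem_nhds (small_mem y), self_mem_nhdsWithin] with t ht ht'
  rw [key y t ht]
  have ht0 : t < 0 := ht'
  have hmax : max (1 + t * y 0) (1 + t * y 1) = 1 + t * min (y 0) (y 1) := by
    rcases le_total (y 0) (y 1) with h | h
    · rw [min_eq_left h, max_eq_left]; nlinarith
    · rw [min_eq_right h, max_eq_right]; nlinarith
  rw [hmax, add_sub_cancel_left, mul_div_cancel_left₀ _ (ne_of_lt ht0)]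

lemma rho_eq (y : Fin 2 → ℝ) : rho (![1, 1] : Fin 2 → ℝ) y = (y 0 + y 1) / 2 := by
  rw [rho, rhoP_eq, rhoM_eq, max_add_min]

/-- In ℓ∞² (that is, Fin 2 → ℝ with the sup norm), the point x = (1,1) is ρ-smooth but
neither ρ₊-smooth nor ρ₋-smooth. -/
theorem linfty2_rho_smooth_not_rhoPM_smooth :
    (∀ y₁ y₂ : Fin 2 → ℝ,
        rho (![1, 1] : Fin 2 → ℝ) (y₁ + y₂) =
          rho (![1, 1] : Fin 2 → ℝ) y₁ + rho (![1, 1] : Fin 2 → ℝ) y₂) ∧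
      ¬(∀ y₁ y₂ : Fin 2 → ℝ,
          rhoP (![1, 1] : Fin 2 → ℝ) (y₁ + y₂) =
            rhoP (![1, 1] : Fin 2 → ℝ) y₁ + rhoP (![1, 1] : Fin 2 → ℝ) y₂) ∧
      ¬(∀ y₁ y₂ : Fin 2 → ℝ,
          rhoM (![1, 1] : Fin 2 → ℝ) (y₁ + y₂) =
            rhoM (![1, 1] : Fin 2 → ℝ) y₁ + rhoM (![1, 1] : Fin 2 → ℝ) y₂) := by
  refine ⟨fun y₁ y₂ => ?_, fun h => ?_, fun h => ?_⟩
  · simp only [rho_eq, Pi.add_apply]; ring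
  · have := h ![1, 0] ![0, 1]
    simp only [rhoP_eq, Pi.add_apply, Matrix.cons_val_zero, Matrix.cons_val_one,
      Matrix.head_cons] at this
    norm_num at this
  · have := h ![1, 0] ![0, 1]
    simp only [rhoM_eq, Pi.add_apply, Matrix.cons_val_zero, Matrix.cons_val_one,
      Matrix.head_cons] at this
    norm_num at this
end
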